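/- Let α > 0 and let u ∈ C⁴([0,1/2]) satisfy the elastica equation (1/√(1+u'²)) · d/dx( κ_u'/√(1+u'²) ) + (1/2)κ_u³ = 0 on (0,1/2), where κ_u = u''/(1+u'²)^{3/2}, with initial data u(0) = 0, u'(0) = α, u''(0) = 0, u'''(0) = β_*(α), and suppose u'(1/2) = 0. Then u'''(1/2) = β_*(α)/(1+α²)^{5/2} < 0. In particular, the symmetric extension of u to [0,1], defined by u(x) = u(1−x) for x ∈ [1/2,1], is not of class C³ at x = 1/2. -/

import Mathlib

open Real MeasureTheory

/-- The curvature of the graph `(x, u x)`. -/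
noncomputable def curv (u : ℝ → ℝ) (x : ℝ) : ℝ :=
  iteratedDeriv 2 u x / (1 + deriv u x ^ 2) ^ ((3:ℝ)/2)

/-- `u` satisfies the elastica equation
`(1/√(1+u'²)) (κ_u'/√(1+u'²))' + κ_u³/2 = 0` on the set `E`. -/
def ElasticaOn (u : ℝ → ℝ) (E : Set ℝ) : Prop :=
  ∀ x ∈ E,
    (1 / Real.sqrt (1 + deriv u x ^ 2)) *
        deriv (fun y => deriv (curv u) y / Real.sqrt (1 + deriv u y ^ 2)) x
      + (1/2) * curv u x ^ 3 = 0

/-- `β_*(α) = −2(1+α²)^{5/2} (∫₀^α (α−t)^{-1/2}(1+t²)^{-5/4} dt)²`. -/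
noncomputable def βstar (α : ℝ) : ℝ :=
  -2 * (1 + α ^ 2) ^ ((5:ℝ)/2) *
    (∫ t in (0:ℝ)..α, (α - t) ^ (-(1:ℝ)/2) * (1 + t ^ 2) ^ (-(5:ℝ)/4)) ^ 2

/-!
The elastica equation is invariant under vertical translations, and the corresponding conserved
quantity `F = κ_s cos θ + (κ²/2) sin θ` satisfies `F' = (elastica operator)` identically, so
`F(0) = F(1/2)`. Where `u'' = 0` (at `x = 0`) one has `F = u'''/(1+u'²)^{5/2}`, and where `u' = 0`
(at `x = 1/2`) one has `F = u'''`. Finally, the reflection `x ↦ u(1 - x)` flips the sign of the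
third derivative, so the symmetric extension can be `C³` at `1/2` only if `u'''(1/2) = 0`.
-/

open Topology Set

lemma ContDiff.hasDerivAt_iteratedDeriv {u : ℝ → ℝ} {n : ℕ∞} {k : ℕ} (hu : ContDiff ℝ n u)
    (hk : k < n) (x : ℝ) : HasDerivAt (iteratedDeriv k u) (iteratedDeriv (k + 1) u x) x := by
  rw [iteratedDeriv_succ]
  exact (hu.differentiable_iteratedDeriv k (by exact_mod_cast hk) x).hasDerivAt

lemma ContDiff.hasDerivAt_deriv {u : ℝ → ℝ} {n : ℕ∞} (hu : ContDiff ℝ n u) (hn : 1 < n) (x : ℝ) :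
    HasDerivAt (deriv u) (iteratedDeriv 2 u x) x := by
  simpa only [iteratedDeriv_one] using hu.hasDerivAt_iteratedDeriv hn x

lemma HasDerivAt.sqrt_one_add_sq {f : ℝ → ℝ} {f' x : ℝ} (hf : HasDerivAt f f' x) :
    HasDerivAt (fun y => √(1 + f y ^ 2)) (f x * f' / √(1 + f x ^ 2)) x := by
  convert ((hf.fun_pow 2).const_add 1).sqrt (by positivity) using 1
  field_simp
  ring

lemma curv_eq_div_sqrt_pow (u : ℝ → ℝ) (x : ℝ) :
    curv u x = iteratedDeriv 2 u x / √(1 + deriv u x ^ 2) ^ 3 := by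
  rw [curv, rpow_div_two_eq_sqrt _ (by positivity), ← rpow_natCast]
  norm_num

lemma contDiff_curv {u : ℝ → ℝ} {n : ℕ} (hu : ContDiff ℝ (n + 2 : ℕ) u) :
    ContDiff ℝ n (curv u) := by
  have hq : ContDiff ℝ n (iteratedDeriv 2 u) := by
    rw [iteratedDeriv_eq_iterate]; exact hu.iterate_deriv' n 2
  have hp : ContDiff ℝ n (deriv u) := by
    simpa only [Function.iterate_one] using (hu.of_le (by norm_cast; omega)).iterate_deriv' n 1
  have hs : ContDiff ℝ n fun x => √(1 + deriv u x ^ 2) :=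
    (contDiff_const.add (hp.pow 2)).sqrt fun x => by positivity
  rw [funext (curv_eq_div_sqrt_pow u)]
  exact hq.div (hs.pow 3) fun x => by positivity

lemma hasDerivAt_curv {u : ℝ → ℝ} (hu : ContDiff ℝ 3 u) (x : ℝ) :
    HasDerivAt (curv u)
      ((iteratedDeriv 3 u x * (1 + deriv u x ^ 2) - 3 * deriv u x * iteratedDeriv 2 u x ^ 2) /
        √(1 + deriv u x ^ 2) ^ 5) x := by
  have hS := (hu.hasDerivAt_deriv (by norm_num) x).sqrt_one_add_sq
  have hS0 : √(1 + deriv u x ^ 2) ≠ 0 := by positivity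
  have hS2 : √(1 + deriv u x ^ 2) ^ 2 = 1 + deriv u x ^ 2 := sq_sqrt (by positivity)
  rw [funext (curv_eq_div_sqrt_pow u)]
  refine ((hu.hasDerivAt_iteratedDeriv (k := 2) (by norm_num) x).div (hS.fun_pow 3)
    (pow_ne_zero 3 hS0)).congr_deriv ?_
  field_simp
  linear_combination (iteratedDeriv (2 + 1) u x * √(1 + deriv u x ^ 2) ^ 2) * hS2

noncomputable def tangentCos (u : ℝ → ℝ) (x : ℝ) : ℝ := 1 / √(1 + deriv u x ^ 2)

noncomputable def tangentSin (u : ℝ → ℝ) (x : ℝ) : ℝ := deriv u x / √(1 + deriv u x ^ 2)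

lemma hasDerivAt_tangentCos {u : ℝ → ℝ} (hu : ContDiff ℝ 2 u) (x : ℝ) :
    HasDerivAt (tangentCos u) (-(curv u x * deriv u x)) x := by
  have hS0 : √(1 + deriv u x ^ 2) ≠ 0 := by positivity
  refine ((hasDerivAt_const x 1).div (hu.hasDerivAt_deriv (by norm_num) x).sqrt_one_add_sq
    hS0).congr_deriv ?_
  rw [curv_eq_div_sqrt_pow]
  field_simp
  ring

lemma hasDerivAt_tangentSin {u : ℝ → ℝ} (hu : ContDiff ℝ 2 u) (x : ℝ) :
    HasDerivAt (tangentSin u) (curv u x) x := by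
  have hp := hu.hasDerivAt_deriv (by norm_num) x
  have hS0 : √(1 + deriv u x ^ 2) ≠ 0 := by positivity
  have hS2 : √(1 + deriv u x ^ 2) ^ 2 = 1 + deriv u x ^ 2 := sq_sqrt (by positivity)
  refine (hp.div hp.sqrt_one_add_sq hS0).congr_deriv ?_
  rw [curv_eq_div_sqrt_pow]
  field_simp
  linear_combination iteratedDeriv 2 u x * hS2

/-- `κ_s cos θ + (κ² / 2) sin θ`, with `θ` the tangent angle and `κ_s` the arclength
derivative of the curvature. -/
noncomputable def elasticaFlux (u : ℝ → ℝ) (x : ℝ) : ℝ :=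
  deriv (curv u) x / √(1 + deriv u x ^ 2) * tangentCos u x + curv u x ^ 2 / 2 * tangentSin u x

lemma hasDerivAt_elasticaFlux {u : ℝ → ℝ} (hu : ContDiff ℝ 4 u) (x : ℝ) :
    HasDerivAt (elasticaFlux u)
      ((1 / √(1 + deriv u x ^ 2)) *
          deriv (fun y => deriv (curv u) y / √(1 + deriv u y ^ 2)) x
        + (1/2) * curv u x ^ 3) x := by
  have hu2 : ContDiff ℝ 2 u := hu.of_le (by norm_num)
  have hκ : Differentiable ℝ (curv u) :=
    (contDiff_curv (n := 2) hu).differentiable (by norm_num)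
  have hκ' : Differentiable ℝ (deriv (curv u)) :=
    (contDiff_curv (n := 2) hu).deriv'.differentiable one_ne_zero
  have hκs : DifferentiableAt ℝ (fun y => deriv (curv u) y / √(1 + deriv u y ^ 2)) x :=
    (hκ' x).div (hu2.hasDerivAt_deriv (by norm_num) x).sqrt_one_add_sq.differentiableAt
      (by positivity)
  refine ((hκs.hasDerivAt.mul (hasDerivAt_tangentCos hu2 x)).add
    ((((hκ x).hasDerivAt.fun_pow 2).div_const 2).mul (hasDerivAt_tangentSin hu2 x))).congr_deriv ?_
  -- `κ_s (cos θ)' = -κ κ' sin θ` cancels `(κ² / 2)' sin θ`; the rest is the elastica operator.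
  have hS0 : √(1 + deriv u x ^ 2) ≠ 0 := by positivity
  simp only [tangentCos, tangentSin]
  field_simp
  ring

theorem ElasticaOn.elasticaFlux_eq {u : ℝ → ℝ} {a b : ℝ} (h : ElasticaOn u (Ioo a b))
    (hu : ContDiff ℝ 4 u) (hab : a ≤ b) : elasticaFlux u a = elasticaFlux u b := by
  rcases hab.eq_or_lt with rfl | hab
  · rfl
  have hF x := hasDerivAt_elasticaFlux hu x
  obtain ⟨-, -, hslope⟩ := exists_hasDerivAt_eq_slope (elasticaFlux u) (fun _ => 0) hab
    (fun x _ => (hF x).continuousAt.continuousWithinAt) fun x hx => h x hx ▸ hF x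
  have := (div_eq_zero_iff.mp hslope.symm).resolve_right (sub_ne_zero.mpr hab.ne')
  exact (sub_eq_zero.mp this).symm

lemma elasticaFlux_of_iteratedDeriv_two_eq_zero {u : ℝ → ℝ} (hu : ContDiff ℝ 3 u) {x : ℝ}
    (hx : iteratedDeriv 2 u x = 0) :
    elasticaFlux u x = iteratedDeriv 3 u x / (1 + deriv u x ^ 2) ^ ((5:ℝ)/2) := by
  have hS0 : √(1 + deriv u x ^ 2) ≠ 0 := by positivity
  have hS2 : √(1 + deriv u x ^ 2) ^ 2 = 1 + deriv u x ^ 2 := sq_sqrt (by positivity)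
  rw [elasticaFlux, tangentCos, tangentSin, (hasDerivAt_curv hu x).deriv, curv_eq_div_sqrt_pow, hx,
    rpow_div_two_eq_sqrt _ (by positivity), show (5:ℝ) = (5:ℕ) by norm_num, rpow_natCast]
  field_simp
  linear_combination (-2 * iteratedDeriv 3 u x) * hS2

lemma elasticaFlux_of_deriv_eq_zero {u : ℝ → ℝ} (hu : ContDiff ℝ 3 u) {x : ℝ}
    (hx : deriv u x = 0) : elasticaFlux u x = iteratedDeriv 3 u x := by
  simp [elasticaFlux, tangentCos, tangentSin, (hasDerivAt_curv hu x).deriv, hx]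

lemma βstar_neg {α : ℝ} (hα : 0 < α) : βstar α < 0 := by
  have hint : IntervalIntegrable
      (fun t : ℝ => (α - t) ^ (-(1:ℝ)/2) * (1 + t ^ 2) ^ (-(5:ℝ)/4)) volume 0 α := by
    have hsing : IntervalIntegrable (fun t : ℝ => (α - t) ^ (-(1:ℝ)/2)) volume 0 α := by
      simpa using (intervalIntegral.intervalIntegrable_rpow' (r := -(1:ℝ)/2) (a := α) (b := 0)
        (by norm_num)).comp_sub_left α
    refine hsing.mul_continuousOn (ContinuousOn.rpow_const (by fun_prop) fun t _ => Or.inl ?_)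
    positivity
  have hI : 0 < ∫ t in (0:ℝ)..α, (α - t) ^ (-(1:ℝ)/2) * (1 + t ^ 2) ^ (-(5:ℝ)/4) :=
    intervalIntegral.intervalIntegral_pos_of_pos_on hint
      (fun t ht => mul_pos (rpow_pos_of_pos (sub_pos.mpr ht.2) _) (by positivity)) hα
  unfold βstar
  have : 0 < (1 + α ^ 2) ^ ((5:ℝ)/2) := by positivity
  nlinarith [mul_pos this (pow_pos hI 2)]

theorem iteratedDeriv_eq_of_contDiffAt_reflect {u : ℝ → ℝ} {n : ℕ} (hu : ContDiff ℝ n u)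
    {a b : ℝ} (h : ContDiffAt ℝ n (fun x => if x ≤ a then u x else u (b - x)) a) :
    iteratedDeriv n u a = (-1) ^ n * iteratedDeriv n u (b - a) := by
  set v := fun x => if x ≤ a then u x else u (b - x)
  have hv : ContinuousAt (iteratedDeriv n v) a := by
    rw [show iteratedDeriv n v = fun x => iteratedFDeriv ℝ n v x fun _ => 1 from
      funext fun x => iteratedDeriv_eq_iteratedFDeriv]
    exact (h.continuousAt_iteratedFDeriv le_rfl).eval_const _
  have hu' : Continuous (iteratedDeriv n u) := hu.continuous_iteratedDeriv' n
  have left : iteratedDeriv n v =ᶠ[𝓝[<] a] iteratedDeriv n u := by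
    filter_upwards [self_mem_nhdsWithin] with x (hx : x < a)
    refine Filter.EventuallyEq.iteratedDeriv_eq n ?_
    filter_upwards [Iio_mem_nhds hx] with y (hy : y < a)
    simp [v, hy.le]
  have right : iteratedDeriv n v =ᶠ[𝓝[>] a] fun x => (-1) ^ n * iteratedDeriv n u (b - x) := by
    filter_upwards [self_mem_nhdsWithin] with x (hx : a < x)
    rw [← smul_eq_mul, ← congrFun (iteratedDeriv_comp_const_sub n u b) x]
    refine Filter.EventuallyEq.iteratedDeriv_eq n ?_
    filter_upwards [Ioi_mem_nhds hx] with y (hy : a < y)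
    simp [v, not_le.mpr hy]
  have hl := tendsto_nhds_unique_of_eventuallyEq (hv.mono_left nhdsWithin_le_nhds)
    (hu'.continuousAt.mono_left nhdsWithin_le_nhds) left
  have hr := tendsto_nhds_unique_of_eventuallyEq (hv.mono_left nhdsWithin_le_nhds)
    (((hu'.comp (continuous_sub_left b)).const_mul _).continuousAt.mono_left
      nhdsWithin_le_nhds) right
  exact hl.symm.trans hr

theorem stmt_15_general (α : ℝ) (hα : 0 < α) (u : ℝ → ℝ) (hu : ContDiff ℝ 4 u)
    (heq : ElasticaOn u (Set.Ioo 0 (1/2)))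
    (h1 : deriv u 0 = α) (h2 : iteratedDeriv 2 u 0 = 0)
    (h3 : iteratedDeriv 3 u 0 = βstar α) (hend : deriv u (1/2) = 0) :
    iteratedDeriv 3 u (1/2) = βstar α / (1 + α ^ 2) ^ ((5:ℝ)/2) ∧
    βstar α / (1 + α ^ 2) ^ ((5:ℝ)/2) < 0 ∧
    ¬ ContDiffAt ℝ 3 (fun x : ℝ => if x ≤ 1/2 then u x else u (1 - x)) (1/2) := by
  have hu3 : ContDiff ℝ 3 u := hu.of_le (by norm_num)
  have hflux := heq.elasticaFlux_eq hu (by norm_num)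
  rw [elasticaFlux_of_iteratedDeriv_two_eq_zero hu3 h2, elasticaFlux_of_deriv_eq_zero hu3 hend,
    h1, h3] at hflux
  have hneg : βstar α / (1 + α ^ 2) ^ ((5:ℝ)/2) < 0 :=
    div_neg_of_neg_of_pos (βstar_neg hα) (by positivity)
  refine ⟨hflux.symm, hneg, fun hC3 => ?_⟩
  have hodd := iteratedDeriv_eq_of_contDiffAt_reflect hu3 hC3
  norm_num at hodd
  linarith

/-- For the shooting solution, `u'''(1/2) = β_*(α)/(1+α²)^{5/2} < 0`; in particular the
symmetric extension `x ↦ u(min x (1−x))` to `[0,1]` is not `C³` at `x = 1/2`. -/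
theorem stmt_15 (α : ℝ) (hα : 0 < α) (u : ℝ → ℝ) (hu : ContDiff ℝ 4 u)
    (heq : ElasticaOn u (Set.Ioo 0 (1/2)))
    (h0 : u 0 = 0) (h1 : deriv u 0 = α) (h2 : iteratedDeriv 2 u 0 = 0)
    (h3 : iteratedDeriv 3 u 0 = βstar α) (hend : deriv u (1/2) = 0) :
    iteratedDeriv 3 u (1/2) = βstar α / (1 + α ^ 2) ^ ((5:ℝ)/2) ∧
    βstar α / (1 + α ^ 2) ^ ((5:ℝ)/2) < 0 ∧
    ¬ ContDiffAt ℝ 3 (fun x : ℝ => if x ≤ 1/2 then u x else u (1 - x)) (1/2) :=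
  stmt_15_general α hα u hu heq h1 h2 h3 hend
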